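/- Let f be a real-valued harmonic function on 𝔻 with values in (-1,1). Then there exists an absolute constant M > 0 (independent of f) such that for all z ∈ 𝔻 and all δ with 0 < δ < 1 - |z|, 𝓜_f(z) ≤ 2M(M_{z,δ} - |f(z)|)/δ, where M_{z,δ} = sup{|f(w)| : |w - z| < δ} and 𝓜_f = |f_z| + |f_{z̄}|. -/

import Mathlib

/-!
If `g` is holomorphic on `ball z δ` with `Re g > 0`, the Cayley map `w ↦ (w - c) / (w + c̄)`,
`c = g z`, sends the right half-plane into the unit disc and `c` to `0`, with derivative
`1 / (2 Re c)` at `c`. The Schwarz lemma on `ball z δ` then gives `‖g' z‖ ≤ 2 Re g(z) / δ`.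
Applied to `A - h` and `A + h`, where `A` is the supremum of `|Re h|` on `ball z δ`, this yields
the claim with `M = 1`.
-/

open Metric Complex ComplexConjugate

lemma add_conj_ne_zero_of_re_pos {c w : ℂ} (hc : 0 ≤ c.re) (hw : 0 < w.re) :
    w + conj c ≠ 0 := fun h0 => by
  have := congrArg re h0
  simp only [add_re, conj_re, zero_re] at this
  linarith

lemma norm_sub_div_add_conj_lt_one {c w : ℂ} (hc : 0 < c.re) (hw : 0 < w.re) :
    ‖(w - c) / (w + conj c)‖ < 1 := by
  have hden : 0 < ‖w + conj c‖ := norm_pos_iff.mpr (add_conj_ne_zero_of_re_pos hc.le hw)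
  rw [norm_div, div_lt_one hden, ← sq_lt_sq₀ (norm_nonneg _) hden.le, Complex.sq_norm,
    Complex.sq_norm]
  simp only [normSq_apply, sub_re, sub_im, add_re, add_im, conj_re, conj_im]
  nlinarith

lemma norm_deriv_le_of_re_pos {g : ℂ → ℂ} {z : ℂ} {δ : ℝ} (hδ : 0 < δ)
    (hg : DifferentiableOn ℂ g (ball z δ)) (hpos : ∀ w ∈ ball z δ, 0 < (g w).re) :
    ‖deriv g z‖ ≤ 2 * (g z).re / δ := by
  set c := g z
  have hc : 0 < c.re := hpos z (mem_ball_self hδ)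
  have hc_ne : c + conj c ≠ 0 := add_conj_ne_zero_of_re_pos hc.le hc
  set φ : ℂ → ℂ := fun w => (w - c) / (w + conj c)
  have hφ : HasDerivAt φ (c + conj c)⁻¹ c := by
    refine (((hasDerivAt_id c).sub_const c).div ((hasDerivAt_id c).add_const (conj c))
      hc_ne).congr_deriv ?_
    simp only [id, sub_self, zero_mul, sub_zero, one_mul, sq]
    field_simp
  have hgz : HasDerivAt g (deriv g z) z :=
    (hg.differentiableAt (isOpen_ball.mem_nhds (mem_ball_self hδ))).hasDerivAt
  have hdiff : DifferentiableOn ℂ (φ ∘ g) (ball z δ) :=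
    (hg.sub_const c).div (hg.add_const _) fun w hw =>
      add_conj_ne_zero_of_re_pos hc.le (hpos w hw)
  have hmaps : Set.MapsTo (φ ∘ g) (ball z δ) (closedBall ((φ ∘ g) z) 1) := by
    intro w hw
    simp only [Function.comp, φ, c, sub_self, zero_div, mem_closedBall, dist_zero_right]
    exact (norm_sub_div_add_conj_lt_one hc (hpos w hw)).le
  have hschwarz := Complex.norm_deriv_le_div_of_mapsTo_ball hdiff hmaps hδ
  rw [(hφ.comp z hgz).deriv, norm_mul, norm_inv, add_conj, norm_real,
    Real.norm_of_nonneg (by positivity), inv_mul_le_iff₀ (by positivity), mul_one_div]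
    at hschwarz
  exact hschwarz

lemma norm_deriv_le_of_re_nonneg {g : ℂ → ℂ} {z : ℂ} {δ : ℝ} (hδ : 0 < δ)
    (hg : DifferentiableOn ℂ g (ball z δ)) (hnonneg : ∀ w ∈ ball z δ, 0 ≤ (g w).re) :
    ‖deriv g z‖ ≤ 2 * (g z).re / δ := by
  refine le_of_forall_pos_le_add fun ε hε => ?_
  have hshift := norm_deriv_le_of_re_pos hδ (hg.add_const ((ε * δ / 2 : ℝ) : ℂ))
    fun w hw => by simpa using add_pos_of_nonneg_of_pos (hnonneg w hw) (by positivity)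
  rw [deriv_add_const] at hshift
  calc ‖deriv g z‖ ≤ 2 * (g z + ((ε * δ / 2 : ℝ) : ℂ)).re / δ := hshift
    _ = 2 * (g z).re / δ + ε := by simp only [add_re, ofReal_re]; field_simp

lemma norm_deriv_le_of_abs_re_le {h : ℂ → ℂ} {z : ℂ} {δ A : ℝ} (hδ : 0 < δ)
    (hh : DifferentiableOn ℂ h (ball z δ)) (hA : ∀ w ∈ ball z δ, |(h w).re| ≤ A) :
    ‖deriv h z‖ ≤ 2 * (A - |(h z).re|) / δ := by
  have hupper := norm_deriv_le_of_re_nonneg (g := fun w => A - h w) hδ (hh.const_sub _)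
    fun w hw => by simpa using (le_abs_self _).trans (hA w hw)
  have hlower := norm_deriv_le_of_re_nonneg (g := fun w => A + h w) hδ (hh.const_add _)
    fun w hw => by simpa [neg_le_iff_add_nonneg] using (neg_le_abs _).trans (hA w hw)
  rw [deriv_const_sub, norm_neg] at hupper
  rw [deriv_const_add] at hlower
  simp only [sub_re, add_re, ofReal_re] at hupper hlower
  rcases abs_cases (h z).re with ⟨habs, -⟩ | ⟨habs, -⟩
  · rwa [habs]
  · rwa [habs, sub_neg_eq_add]

theorem stmt19 :
    ∃ M > (0:ℝ), ∀ h : ℂ → ℂ,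
      DifferentiableOn ℂ h (ball (0:ℂ) 1) →
      (∀ z ∈ ball (0:ℂ) 1, |(h z).re| < 1) →
      ∀ z ∈ ball (0:ℂ) 1, ∀ δ : ℝ, 0 < δ → δ < 1 - ‖z‖ →
        ‖deriv h z‖ ≤
          2 * M * (sSup ((fun w => |(h w).re|) '' ball z δ) - |(h z).re|) / δ := by
  refine ⟨1, one_pos, fun h hh hbound z _ δ hδ hδz => ?_⟩
  have hsub : ball z δ ⊆ ball 0 1 :=
    ball_subset_ball' (by rw [dist_zero_right]; linarith)
  have hbdd : BddAbove ((fun w => |(h w).re|) '' ball z δ) :=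
    ⟨1, Set.forall_mem_image.mpr fun w hw => (hbound w (hsub hw)).le⟩
  rw [mul_one]
  exact norm_deriv_le_of_abs_re_le hδ (hh.mono hsub)
    fun w hw => le_csSup hbdd (Set.mem_image_of_mem _ hw)
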